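/- arXiv:2302.12508 — 3 statements merged into one kernel-verified Lean document; each statement's English description precedes it below -/
import Mathlib

section
/- Let $X \sim \mathrm{Bin}(n, p)$ with $\mu = np$. For any $\delta \in (0, 1/2]$ and $p \in (0, 1/2]$ with $\delta^2 \mu \geq 3$, it holds that $\Pr[X \geq (1+\delta)\mu] \geq e^{-9\delta^2\mu}$ and $\Pr[X \leq (1-\delta)\mu] \geq e^{-9\delta^2\mu}$. -/
/-!
Effective Stirling bounds `√(2πn) (n/e)ⁿ ≤ n! ≤ e √n (n/e)ⁿ` together with `x ≤ e^(x-1)` give,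
for `0 < k < n` and `μ = np`, the local bound
`P[X = k] ≥ √(2π) / (e² √k) · exp (-(k - μ)² / (μ (1 - p)))`.
Each tail contains a window of `⌊δμ⌋ ≥ √(2μ)/6` consecutive integers within distance `2δμ`
of `μ`, on which every point mass is at least `√(2π) / (e² √(2μ)) · e^(-8δ²μ)`. Summing over
the window leaves the factor `√(2π)/(6e²) ≥ e⁻³ ≥ e^(-δ²μ)`.
-/

open Real Nat

set_option linter.deprecated false

theorem Stirling.factorial_le_exp_one_mul_sqrt_mul_pow {n : ℕ} (hn : n ≠ 0) :
    (n ! : ℝ) ≤ exp 1 * √n * (n / exp 1) ^ n := by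
  have hseq : Stirling.stirlingSeq n ≤ exp 1 / √2 := by
    obtain ⟨m, rfl⟩ := Nat.exists_eq_succ_of_ne_zero hn
    simpa [Stirling.stirlingSeq_one] using Stirling.stirlingSeq'_antitone (Nat.zero_le m)
  have hpos : 0 < √(2 * n) * (n / exp 1) ^ n := by positivity
  rw [Stirling.stirlingSeq, div_le_div_iff₀ hpos (by positivity)] at hseq
  rw [← mul_le_mul_iff_left₀ (show 0 < √2 by positivity)]
  calc (n ! : ℝ) * √2 ≤ exp 1 * (√(2 * n) * (n / exp 1) ^ n) := hseq
    _ = exp 1 * √n * (n / exp 1) ^ n * √2 := by rw [Real.sqrt_mul zero_le_two]; ring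

theorem sqrt_two_pi_div_mul_pow_le_choose {n k : ℕ} (hk : k ≠ 0) (hkn : k < n) :
    √(2 * π) / (exp 1 ^ 2 * √k) * (n ^ n / (k ^ k * (n - k : ℕ) ^ (n - k))) ≤ n.choose k := by
  obtain ⟨j, hj, rfl⟩ : ∃ j, j ≠ 0 ∧ n = k + j := ⟨n - k, by omega, by omega⟩
  rw [show k + j - k = j by omega]
  set c := √(2 * π) / (exp 1 ^ 2 * √k) * ((k + j : ℕ) ^ (k + j) / (k ^ k * j ^ j) : ℝ)
  have hfact : (k + j).choose k * ((k ! : ℝ) * j !) = (k + j)! := by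
    rw [← mul_assoc]
    exact_mod_cast by simpa using Nat.choose_mul_factorial_mul_factorial (Nat.le_add_right k j)
  have hk0 : (0 : ℝ) < k := by positivity
  have hj0 : (0 : ℝ) < j := by positivity
  suffices c * ((k ! : ℝ) * j !) ≤ (k + j)! by
    rw [← hfact] at this
    exact le_of_mul_le_mul_right this (by positivity)
  calc c * ((k ! : ℝ) * j !)
      ≤ c * ((exp 1 * √k * (k / exp 1) ^ k) * (exp 1 * √j * (j / exp 1) ^ j)) := by
        gcongr
        · exact Stirling.factorial_le_exp_one_mul_sqrt_mul_pow hk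
        · exact Stirling.factorial_le_exp_one_mul_sqrt_mul_pow hj
    _ = √(2 * π) * √j * ((k + j : ℕ) / exp 1) ^ (k + j) := by
        simp only [c, div_pow, pow_add]
        field_simp
    _ ≤ √(2 * π * (k + j : ℕ)) * ((k + j : ℕ) / exp 1) ^ (k + j) := by
        rw [Real.sqrt_mul' _ (Nat.cast_nonneg _)]
        gcongr
        exact_mod_cast Nat.le_add_left j k
    _ ≤ (k + j)! := Stirling.le_factorial_stirling (k + j)

theorem pow_le_exp_mul_sub_one (k : ℕ) {x : ℝ} (hx : 0 ≤ x) : x ^ k ≤ exp (k * (x - 1)) := by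
  calc x ^ k ≤ exp (x - 1) ^ k := by
        gcongr; linarith [add_one_le_exp (x - 1)]
    _ = exp (k * (x - 1)) := by rw [← exp_nat_mul]

theorem exp_mul_one_sub_div_le_div_pow (k : ℕ) {a : ℝ} (ha : 0 < a) :
    exp (k * (1 - k / a)) ≤ (a / k) ^ k := by
  rcases Nat.eq_zero_or_pos k with rfl | hk
  · simp
  calc exp (k * (1 - k / a)) = (exp (k * (k / a - 1)))⁻¹ := by rw [← exp_neg]; ring_nf
    _ ≤ ((k / a) ^ k)⁻¹ := inv_anti₀ (by positivity) (pow_le_exp_mul_sub_one k (by positivity))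
    _ = (a / k) ^ k := by rw [← inv_pow, inv_div]

/-- The right side is `exp (-n KL(k/n ‖ p))` and the exponent on the left is `n χ²(k/n ‖ p)`:
relative entropy is bounded by the `χ²` divergence. -/
theorem exp_neg_sq_div_le_pow_mul_pow {n k : ℕ} {p : ℝ} (hn : n ≠ 0) (hkn : k ≤ n)
    (hp0 : 0 < p) (hp1 : p < 1) :
    exp (-((k - n * p) ^ 2 / (n * p * (1 - p)))) ≤
      (n * p / k) ^ k * (n * (1 - p) / (n - k : ℕ)) ^ (n - k) := by
  have hn0 : (0 : ℝ) < n := by positivity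
  have hq0 : 0 < 1 - p := by linarith
  have hchi : -((k - n * p) ^ 2 / (n * p * (1 - p))) =
      k * (1 - k / (n * p)) + (n - k : ℕ) * (1 - (n - k : ℕ) / (n * (1 - p))) := by
    rw [Nat.cast_sub hkn]
    field_simp
    ring
  rw [hchi, exp_add]
  gcongr
  · exact exp_mul_one_sub_div_le_div_pow k (by positivity)
  · exact exp_mul_one_sub_div_le_div_pow (n - k) (by positivity)

theorem sqrt_two_pi_div_mul_exp_le_choose_mul_pow_mul_pow {n k : ℕ} {p : ℝ} (hk : k ≠ 0)
    (hkn : k < n) (hp0 : 0 < p) (hp1 : p < 1) :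
    √(2 * π) / (exp 1 ^ 2 * √k) * exp (-((k - n * p) ^ 2 / (n * p * (1 - p)))) ≤
      n.choose k * p ^ k * (1 - p) ^ (n - k) := by
  have hn : n ≠ 0 := by omega
  have hq0 : 0 < 1 - p := by linarith
  have hpow : (n : ℝ) ^ n = n ^ k * n ^ (n - k) := by rw [← pow_add, Nat.add_sub_cancel' hkn.le]
  calc √(2 * π) / (exp 1 ^ 2 * √k) * exp (-((k - n * p) ^ 2 / (n * p * (1 - p))))
      ≤ √(2 * π) / (exp 1 ^ 2 * √k) *
          ((n * p / k) ^ k * (n * (1 - p) / (n - k : ℕ)) ^ (n - k)) := by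
        gcongr
        exact exp_neg_sq_div_le_pow_mul_pow hn hkn.le hp0 hp1
    _ = √(2 * π) / (exp 1 ^ 2 * √k) * (n ^ n / (k ^ k * (n - k : ℕ) ^ (n - k))) *
          (p ^ k * (1 - p) ^ (n - k)) := by
        rw [hpow, div_pow, div_pow, mul_pow, mul_pow]
        ring
    _ ≤ n.choose k * (p ^ k * (1 - p) ^ (n - k)) := by
        gcongr
        exact sqrt_two_pi_div_mul_pow_le_choose hk hkn
    _ = n.choose k * p ^ k * (1 - p) ^ (n - k) := by ring

theorem sqrt_two_pi_div_mul_exp_le_choose_mul_pow_mul_pow_of_abs_sub_le {n k : ℕ} {p r : ℝ}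
    (hk : k ≠ 0) (hkn : k < n) (hp0 : 0 < p) (hp2 : p ≤ 1 / 2) (hkr : |k - n * p| ≤ r)
    (hr : r ≤ n * p) :
    √(2 * π) / (exp 1 ^ 2 * √(2 * (n * p))) * exp (-(2 * r ^ 2 / (n * p))) ≤
      n.choose k * p ^ k * (1 - p) ^ (n - k) := by
  have hμ : 0 < (n : ℝ) * p := mul_pos (Nat.cast_pos.mpr (by omega)) hp0
  refine le_trans ?_ (sqrt_two_pi_div_mul_exp_le_choose_mul_pow_mul_pow hk hkn hp0 (by linarith))
  have hsq : (k - n * p) ^ 2 ≤ r ^ 2 := sq_le_sq' (abs_le.mp hkr).1 (abs_le.mp hkr).2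
  have hchi : (k - n * p) ^ 2 / (n * p * (1 - p)) ≤ 2 * r ^ 2 / (n * p) := by
    rw [div_le_div_iff₀ (by nlinarith) hμ]
    nlinarith [mul_le_mul_of_nonneg_left hsq hμ.le,
      mul_nonneg (mul_nonneg hμ.le (sq_nonneg r)) (by linarith : (0 : ℝ) ≤ 1 - 2 * p)]
  gcongr √(2 * π) / (exp 1 ^ 2 * √?_) * exp ?_
  · linarith [(abs_le.mp hkr).2]
  · exact neg_le_neg hchi

theorem PMF.sum_toReal_le_toReal_toMeasure {α : Type*} [MeasurableSpace α]
    [MeasurableSingletonClass α] (P : PMF α) {F : Finset α} {S : Set α} (hFS : ↑F ⊆ S) :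
    ∑ x ∈ F, (P x).toReal ≤ (P.toMeasure S).toReal := by
  rw [← ENNReal.toReal_sum fun x _ ↦ P.apply_ne_top x, ← P.toMeasure_apply_finset]
  exact ENNReal.toReal_mono (MeasureTheory.measure_ne_top _ _) (MeasureTheory.measure_mono hFS)

theorem PMF.toReal_binomial_apply {p : ℝ} (hp0 : 0 ≤ p) (hp1 : p.toNNReal ≤ 1) (n : ℕ)
    (i : Fin (n + 1)) :
    (PMF.binomial p.toNNReal hp1 n i).toReal = n.choose i * p ^ (i : ℕ) * (1 - p) ^ (n - i) := by
  rw [PMF.binomial_apply, Fin.val_last, ENNReal.toReal_mul, ENNReal.toReal_mul,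
    ENNReal.toReal_pow, ENNReal.toReal_pow,
    ENNReal.toReal_sub_of_le (ENNReal.coe_le_one_iff.mpr hp1) ENNReal.one_ne_top,
    ENNReal.coe_toReal, Real.coe_toNNReal _ hp0, ENNReal.toReal_one, ENNReal.toReal_natCast]
  ring

theorem exp_neg_three_le_sqrt_two_pi_div : exp (-3) ≤ √(2 * π) / (6 * exp 1 ^ 2) := by
  have hpi : (2.5 : ℝ) ≤ √(2 * π) := Real.le_sqrt_of_sq_le (by nlinarith [Real.pi_gt_d2])
  have he : (2.7 : ℝ) ≤ exp 1 := by linarith [Real.exp_one_gt_d9]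
  have h6 : 6 ≤ √(2 * π) * exp 1 := by nlinarith
  rw [show (3 : ℝ) = (3 : ℕ) by norm_num, exp_neg, ← exp_one_pow]
  field_simp
  nlinarith [mul_le_mul_of_nonneg_right h6 (sq_nonneg (exp 1))]

theorem mul_le_toReal_binomial_toMeasure_of_Ico {n a m : ℕ} {p r : ℝ} (hp0 : 0 < p)
    (hp2 : p ≤ 1 / 2) (hp1 : p.toNNReal ≤ 1) {S : Set (Fin (n + 1))} (ha : a ≠ 0)
    (ham : a + m ≤ n) (hr : r ≤ n * p)
    (hwin : ∀ k ∈ Finset.Ico a (a + m), |(k : ℝ) - n * p| ≤ r)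
    (hS : ∀ x : Fin (n + 1), (x : ℕ) ∈ Finset.Ico a (a + m) → x ∈ S) :
    m * (√(2 * π) / (exp 1 ^ 2 * √(2 * (n * p))) * exp (-(2 * r ^ 2 / (n * p)))) ≤
      ((PMF.binomial p.toNNReal hp1 n).toMeasure S).toReal := by
  have hlt : ∀ k ∈ Finset.Ico a (a + m), k < n + 1 := fun k hk ↦ by
    rw [Finset.mem_Ico] at hk; omega
  set F := (Finset.Ico a (a + m)).attachFin hlt
  have hcard : F.card = m := by simp [F]
  calc _ = F.card •
        (√(2 * π) / (exp 1 ^ 2 * √(2 * (n * p))) * exp (-(2 * r ^ 2 / (n * p)))) := by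
        rw [hcard, nsmul_eq_mul]
    _ ≤ ∑ x ∈ F, (PMF.binomial p.toNNReal hp1 n x).toReal := by
        refine Finset.card_nsmul_le_sum F _ _ fun x hx ↦ ?_
        have hxI := (Finset.mem_attachFin hlt).mp hx
        have hxI' := Finset.mem_Ico.mp hxI
        rw [PMF.toReal_binomial_apply hp0.le]
        exact sqrt_two_pi_div_mul_exp_le_choose_mul_pow_mul_pow_of_abs_sub_le (by omega)
          (by omega) hp0 hp2 (hwin _ hxI) hr
    _ ≤ _ := PMF.sum_toReal_le_toReal_toMeasure _
        fun x hx ↦ hS x ((Finset.mem_attachFin hlt).mp hx)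

theorem exp_le_toReal_binomial_toMeasure_of_Ico {n a : ℕ} {p δ : ℝ} (hp0 : 0 < p)
    (hp2 : p ≤ 1 / 2) (hp1 : p.toNNReal ≤ 1) (hδ0 : 0 < δ) (hδ2 : δ ≤ 1 / 2)
    (h3 : 3 ≤ δ ^ 2 * (n * p)) {S : Set (Fin (n + 1))} (ha : a ≠ 0)
    (hlo : (1 - 2 * δ) * (n * p) ≤ a)
    (hhi : (a + ⌊δ * (n * p)⌋₊ : ℕ) < (1 + 2 * δ) * (n * p) + 1)
    (hS : ∀ x : Fin (n + 1), (x : ℕ) ∈ Finset.Ico a (a + ⌊δ * (n * p)⌋₊) → x ∈ S) :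
    exp (-9 * δ ^ 2 * (n * p)) ≤ ((PMF.binomial p.toNNReal hp1 n).toMeasure S).toReal := by
  set μ : ℝ := n * p
  set m := ⌊δ * μ⌋₊
  push_cast at hhi
  have hμ : 0 < μ := by nlinarith [sq_nonneg δ]
  have h2μ : 2 * μ ≤ n := by nlinarith [(Nat.cast_nonneg n : (0 : ℝ) ≤ n)]
  have hδμ : 6 ≤ δ * μ := by nlinarith
  have hm : δ * μ - 1 < m := Nat.sub_one_lt_floor _
  have hsqrt : √(2 * μ) ≤ 6 * m := Real.sqrt_le_iff.mpr ⟨by positivity, by nlinarith⟩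
  have ham : a + m ≤ n := by
    have : (a + m : ℝ) < n + 1 := by nlinarith
    exact_mod_cast Nat.lt_succ_iff.mp (by exact_mod_cast this)
  have hwin : ∀ k ∈ Finset.Ico a (a + m), |(k : ℝ) - μ| ≤ 2 * δ * μ := fun k hk ↦ by
    obtain ⟨hak, hkm⟩ := Finset.mem_Ico.mp hk
    have h1 : (a : ℝ) ≤ k := by exact_mod_cast hak
    have h2 : ((k + 1 : ℕ) : ℝ) ≤ (a + m : ℕ) := by exact_mod_cast hkm
    push_cast at h2
    rw [abs_le]; constructor <;> linarith
  refine le_trans ?_ (mul_le_toReal_binomial_toMeasure_of_Ico hp0 hp2 hp1 ha ham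
    (by nlinarith) hwin hS)
  have hexp : 2 * (2 * δ * μ) ^ 2 / μ = 8 * δ ^ 2 * μ := by field_simp; ring
  rw [hexp]
  calc exp (-9 * δ ^ 2 * μ) = exp (-(δ ^ 2 * μ)) * exp (-(8 * δ ^ 2 * μ)) := by
        rw [← exp_add]; ring_nf
    _ ≤ exp (-3) * exp (-(8 * δ ^ 2 * μ)) := by gcongr
    _ ≤ √(2 * π) / (6 * exp 1 ^ 2) * exp (-(8 * δ ^ 2 * μ)) := by
        gcongr; exact exp_neg_three_le_sqrt_two_pi_div
    _ ≤ (√(2 * π) / exp 1 ^ 2 * (m / √(2 * μ))) * exp (-(8 * δ ^ 2 * μ)) := by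
        rw [div_mul_eq_div_div_swap, div_eq_mul_one_div _ 6]
        gcongr _ * ?_ * _
        rw [div_le_div_iff₀ (by norm_num) (by positivity)]
        linarith
    _ = m * (√(2 * π) / (exp 1 ^ 2 * √(2 * μ)) * exp (-(8 * δ ^ 2 * μ))) := by ring

/-- Anti-concentration (reverse Chernoff) bound for the binomial
distribution `Bin(n, p)` with mean `μ = np`: for `δ ∈ (0, 1/2]`, `p ∈ (0, 1/2]` with
`δ²μ ≥ 3`, we have `Pr[X ≥ (1+δ)μ] ≥ e^{-9δ²μ}` and `Pr[X ≤ (1-δ)μ] ≥ e^{-9δ²μ}`. -/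
theorem binomial_anti_concentration
    (n : ℕ) (p δ : ℝ) (hp0 : 0 < p) (hp2 : p ≤ 1 / 2)
    (hδ0 : 0 < δ) (hδ2 : δ ≤ 1 / 2) (h3 : 3 ≤ δ ^ 2 * (n * p)) :
    Real.exp (-9 * δ ^ 2 * (n * p)) ≤
      ((PMF.binomial (Real.toNNReal p)
            (by rw [Real.toNNReal_le_one]; linarith) n).toMeasure
          {k : Fin (n + 1) | (1 + δ) * (n * p) ≤ (k : ℝ)}).toReal ∧
    Real.exp (-9 * δ ^ 2 * (n * p)) ≤
      ((PMF.binomial (Real.toNNReal p)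
            (by rw [Real.toNNReal_le_one]; linarith) n).toMeasure
          {k : Fin (n + 1) | (k : ℝ) ≤ (1 - δ) * (n * p)}).toReal := by
  have hp1 : p.toNNReal ≤ 1 := by rw [Real.toNNReal_le_one]; linarith
  have hμ : 0 < (n : ℝ) * p := by nlinarith [sq_nonneg δ]
  have hfloor : (⌊δ * (n * p)⌋₊ : ℝ) ≤ δ * (n * p) := Nat.floor_le (by positivity)
  constructor
  · have hceil := Nat.ceil_lt_add_one (show 0 ≤ (1 + δ) * (n * p) by positivity)
    refine exp_le_toReal_binomial_toMeasure_of_Ico hp0 hp2 hp1 hδ0 hδ2 h3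
      (a := ⌈(1 + δ) * (n * p)⌉₊) (Nat.ceil_pos.mpr (by positivity)).ne' ?_ ?_ fun x hx ↦ ?_
    · nlinarith [Nat.le_ceil ((1 + δ) * (n * p))]
    · push_cast; linarith
    · exact Nat.ceil_le.mp (Finset.mem_Ico.mp hx).1
  · -- `max 1`: the point-mass bound needs `k ≠ 0`, and `⌈(1 - 2δ)μ⌉₊ = 0` at `δ = 1/2`
    have hceil := Nat.ceil_lt_add_one (show 0 ≤ (1 - 2 * δ) * (n * p) by nlinarith)
    have ha : (max 1 ⌈(1 - 2 * δ) * (n * p)⌉₊ : ℝ) ≤ (1 - 2 * δ) * (n * p) + 1 := by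
      exact max_le (by nlinarith) hceil.le
    refine exp_le_toReal_binomial_toMeasure_of_Ico hp0 hp2 hp1 hδ0 hδ2 h3
      (a := max 1 ⌈(1 - 2 * δ) * (n * p)⌉₊) (by omega) ?_ ?_ fun x hx ↦ ?_
    · exact (Nat.le_ceil _).trans (by exact_mod_cast le_max_right _ _)
    · push_cast at ha ⊢; nlinarith
    · have hx' : ((x + 1 : ℕ) : ℝ) ≤
          (max 1 ⌈(1 - 2 * δ) * (n * p)⌉₊ + ⌊δ * (n * p)⌋₊ : ℕ) := by
        exact_mod_cast (Finset.mem_Ico.mp hx).2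
      push_cast at hx'
      show (x : ℝ) ≤ (1 - δ) * (n * p)
      linarith
end

section
/- In the Undecided State Dynamics with $k$ opinions, let $u^* = n(k-1)/(2k-1)$ and let $\epsilon \geq 0$. If the current number of undecided agents satisfies $u \geq u^* + \epsilon n$, then the conditional probability that the number of undecided agents increases (given that it changes) is at most $1/2 - \epsilon/2$. -/
/-- The number of undecided agents in a configuration of the USD. -/
def undecidedCount {n k : ℕ} (σ : Fin n → Option (Fin k)) : ℕ :=
  (Finset.univ.filter fun a => σ a = none).card

/-- The support of opinion `i` in a configuration of the USD. -/
def opinionSupport {n k : ℕ} (σ : Fin n → Option (Fin k)) (i : Fin k) : ℕ :=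
  (Finset.univ.filter fun a => σ a = some i).card

/-!
Write `m = n - u` for the number of decided agents and `r² = ∑ xᵢ²`. Then `p₊ ∝ m² - r²` and
`p₋ ∝ u m`, so the claim is `(1 + ε)(m² - r²) ≤ (1 - ε) u m`. Cauchy–Schwarz gives `k r² ≥ m²`,
hence `m² - r² ≤ (k - 1) m² / k`, and it remains to check the linear inequality
`(1 + ε)(k - 1)(n - u) ≤ (1 - ε) k u`, which the threshold on `u` implies.
-/

open Finset

theorem undecidedCount_add_sum_opinionSupport {n k : ℕ} (σ : Fin n → Option (Fin k)) :
    undecidedCount σ + ∑ i, opinionSupport σ i = n := by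
  have h := card_eq_sum_card_fiberwise (f := σ) (s := univ) (t := univ) fun a _ => mem_univ (σ a)
  rw [card_univ, Fintype.card_fin, Fintype.sum_option] at h
  exact h.symm

theorem sum_opinionSupport_eq {n k : ℕ} (σ : Fin n → Option (Fin k)) :
    ∑ i, (opinionSupport σ i : ℝ) = n - undecidedCount σ := by
  rw [eq_sub_iff_add_eq', ← Nat.cast_sum, ← Nat.cast_add,
    undecidedCount_add_sum_opinionSupport]

theorem undecidedCount_le {n k : ℕ} (σ : Fin n → Option (Fin k)) : undecidedCount σ ≤ n := by
  have := undecidedCount_add_sum_opinionSupport σ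
  omega

theorem div_add_le_half_sub_half {A B ε : ℝ} (hA : 0 ≤ A) (hB : 0 ≤ B) (hε : ε ≤ 1)
    (h : (1 + ε) * A ≤ (1 - ε) * B) : A / (A + B) ≤ 1 / 2 - ε / 2 := by
  rcases (add_nonneg hA hB).eq_or_lt with hAB | hAB
  · rw [← hAB, div_zero]
    linarith
  · rw [div_le_iff₀ hAB]
    linarith

section Threshold

variable {n k u ε : ℝ}

theorem threshold_mul_le (hk : 1 ≤ k) (hu : n * (k - 1) / (2 * k - 1) + ε * n ≤ u) :
    n * (k - 1) + ε * n * (2 * k - 1) ≤ u * (2 * k - 1) := by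
  have h2k : 0 < 2 * k - 1 := by linarith
  rwa [div_add' _ _ _ h2k.ne', div_le_iff₀ h2k] at hu

theorem mul_two_mul_sub_one_le_of_threshold (hk : 1 ≤ k) (hun : u ≤ n)
    (hu : n * (k - 1) / (2 * k - 1) + ε * n ≤ u) : ε * n * (2 * k - 1) ≤ n * k := by
  linarith [threshold_mul_le hk hu, mul_le_mul_of_nonneg_right hun (by linarith : 0 ≤ 2 * k - 1)]

theorem le_one_of_threshold (hn : 0 < n) (hk : 1 ≤ k) (hun : u ≤ n)
    (hu : n * (k - 1) / (2 * k - 1) + ε * n ≤ u) : ε ≤ 1 := by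
  have h := mul_two_mul_sub_one_le_of_threshold hk hun hu
  by_contra! hε
  linarith [mul_pos (sub_pos.2 hε) (mul_pos hn (by linarith : 0 < 2 * k - 1)),
    mul_nonneg hn.le (sub_nonneg.2 hk)]

theorem decided_le_of_threshold (hn : 0 < n) (hk : 1 ≤ k) (hε : 0 ≤ ε) (hun : u ≤ n)
    (hu : n * (k - 1) / (2 * k - 1) + ε * n ≤ u) :
    (1 + ε) * (k - 1) * (n - u) ≤ (1 - ε) * k * u := by
  have h2k : 0 < 2 * k - 1 := by linarith
  have hcleared := mul_le_mul_of_nonneg_right (threshold_mul_le hk hu)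
    (by linarith [le_one_of_threshold hn hk hun hu] : 0 ≤ 2 * k - 1 - ε)
  have hεn := mul_le_mul_of_nonneg_left (mul_two_mul_sub_one_le_of_threshold hk hun hu) hε
  -- after multiplying by `2k - 1`, the gap is at least `n ε (2k - 1)(k - 1)`
  have hslack : 0 ≤ n * ε * ((2 * k - 1) * (k - 1)) :=
    mul_nonneg (mul_nonneg hn.le hε) (mul_nonneg h2k.le (sub_nonneg.2 hk))
  refine le_of_mul_le_mul_right ?_ h2k
  linarith

end Threshold

theorem increase_ratio_le_of_threshold {n k u r ε : ℝ} (hn : 0 < n) (hk : 1 ≤ k) (hε : 0 ≤ ε)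
    (hu₀ : 0 ≤ u) (hun : u ≤ n) (hr_lower : (n - u) ^ 2 ≤ k * r) (hr_upper : r ≤ (n - u) ^ 2)
    (hu : n * (k - 1) / (2 * k - 1) + ε * n ≤ u) :
    ((n - u) ^ 2 - r) / ((n - u) ^ 2 - r + u * (n - u)) ≤ 1 / 2 - ε / 2 := by
  have hm : 0 ≤ n - u := sub_nonneg.2 hun
  refine div_add_le_half_sub_half (sub_nonneg.2 hr_upper) (mul_nonneg hu₀ hm)
    (le_one_of_threshold hn hk hun hu) ?_
  have hdecided := mul_le_mul_of_nonneg_right (decided_le_of_threshold hn hk hε hun hu) hm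
  refine le_of_mul_le_mul_left ?_ (by linarith : (0 : ℝ) < k)
  calc k * ((1 + ε) * ((n - u) ^ 2 - r))
      = (1 + ε) * (k * ((n - u) ^ 2 - r)) := by ring
    _ ≤ (1 + ε) * ((k - 1) * (n - u) ^ 2) :=
      mul_le_mul_of_nonneg_left (by linarith) (by linarith)
    _ = (1 + ε) * (k - 1) * (n - u) * (n - u) := by ring
    _ ≤ (1 - ε) * k * u * (n - u) := hdecided
    _ = k * ((1 - ε) * (u * (n - u))) := by ring

/-- In the USD with `k` opinions, let `u* = n(k-1)/(2k-1)` and `ε ≥ 0`.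
If the current number of undecided agents satisfies `u ≥ u* + εn`, then the conditional
probability that the number of undecided agents increases, given that it changes
(`p₊/(p₊ + p₋)` with `p₊ = ((n-u)² - ∑ xᵢ²)/n²` and `p₋ = u(n-u)/n²`), is at most
`1/2 - ε/2`. -/
theorem usd_undecided_increase_conditional_bound
    {n k : ℕ} (hn : 0 < n) (hk : 0 < k) (σ : Fin n → Option (Fin k))
    (ε : ℝ) (hε : 0 ≤ ε)
    (hu : (n : ℝ) * ((k : ℝ) - 1) / (2 * (k : ℝ) - 1) + ε * n
      ≤ (undecidedCount σ : ℝ)) :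
    (((((n : ℝ) - undecidedCount σ) ^ 2 - ∑ i, (opinionSupport σ i : ℝ) ^ 2) / n ^ 2) /
      ((((n : ℝ) - undecidedCount σ) ^ 2 - ∑ i, (opinionSupport σ i : ℝ) ^ 2) / n ^ 2
        + (undecidedCount σ : ℝ) * ((n : ℝ) - undecidedCount σ) / n ^ 2))
      ≤ 1 / 2 - ε / 2 := by
  have hn' : (0 : ℝ) < n := Nat.cast_pos.2 hn
  have hsum := sum_opinionSupport_eq σ
  have hr_lower : ((n : ℝ) - undecidedCount σ) ^ 2 ≤ k * ∑ i, (opinionSupport σ i : ℝ) ^ 2 := by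
    simpa [hsum] using sq_sum_le_card_mul_sum_sq (s := univ) (f := fun i => (opinionSupport σ i : ℝ))
  have hr_upper : ∑ i, (opinionSupport σ i : ℝ) ^ 2 ≤ ((n : ℝ) - undecidedCount σ) ^ 2 := by
    simpa [hsum] using sum_sq_le_sq_sum_of_nonneg (s := univ)
      (f := fun i => (opinionSupport σ i : ℝ)) fun i _ => Nat.cast_nonneg _
  rw [← add_div, div_div_div_cancel_right₀ (pow_ne_zero 2 hn'.ne')]
  exact increase_ratio_le_of_threshold hn' (Nat.one_le_cast.2 hk) hε (Nat.cast_nonneg _)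
    (Nat.cast_le.2 (undecidedCount_le σ)) hr_lower hr_upper hu
end

section
/- Consider two runs of the Undecided State Dynamics on $n$ agents: one with $k$ opinions starting from configuration $\mathbf{x}(0)$, and one with $2$ opinions starting from $\tilde{x}_1(0) = x_1(0)$, $\tilde{x}_2(0) = \sum_{i=2}^k x_i(0)$, and $\tilde{u}(0) = u(0)$. Then there exists a coupling of the two processes such that for all $t \geq 0$: $x_1(t) \geq \tilde{x}_1(t)$ and $x_1(t) + u(t) \geq \tilde{x}_1(t) + \tilde{u}(t)$. -/
/-!
The standing of an agent for opinion 1 is 2 if it holds it, 1 if it is undecided and 0 if it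
holds another opinion. Relabel the agents of the `k`-opinion process so that merging opinions
`2, …, k` into one turns it, agent by agent, into the initial two-opinion configuration, and drive
both processes by the same interaction pairs. With two opinions, the new standing of the
responder is a monotone function of the standings of responder and initiator; with `k` opinions it
can only be higher. So the two-opinion configuration stays pointwise below the `k`-opinion one,
and counting agents of standing at least 2, resp. at least 1, gives the two inequalities. A
relabelled uniform pair is again uniform, so both drivers are i.i.d. uniform.
-/

open MeasureTheory ProbabilityTheory
open scoped ENNReal

/-- One interaction of the Undecided State Dynamics: in the ordered pair `pr`,
`pr.1` is the responder and `pr.2` the initiator; `none` is the undecided state. -/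
def usdStep {n k : ℕ} (σ : Fin n → Option (Fin k)) (pr : Fin n × Fin n) :
    Fin n → Option (Fin k) := fun a =>
  if a = pr.1 then
    match σ pr.1, σ pr.2 with
    | some i, some j => if i = j then some i else none
    | none, some j => some j
    | s, _ => s
  else σ a

/-- The USD process driven by a given sequence of interaction pairs. -/
def usdEvolve {n k : ℕ} (σ₀ : Fin n → Option (Fin k)) (ρ : ℕ → Fin n × Fin n) :
    ℕ → Fin n → Option (Fin k)
  | 0 => σ₀
  | t + 1 => usdStep (usdEvolve σ₀ ρ t) (ρ t)

open Finset

theorem exists_iIndepFun_map_eq (ι : Type) {α : Type} [MeasurableSpace α] (ν : Measure α)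
    [IsProbabilityMeasure ν] :
    ∃ (Ω : Type) (_ : MeasurableSpace Ω) (μ : Measure Ω) (X : ι → Ω → α),
      IsProbabilityMeasure μ ∧ (∀ t, Measurable (X t)) ∧ iIndepFun X μ ∧
      ∀ t, μ.map (X t) = ν :=
  ⟨ι → α, inferInstance, Measure.infinitePi fun _ => ν, fun t ω => ω t, inferInstance,
    measurable_pi_apply, iIndepFun_infinitePi (X := fun _ => id) fun _ => measurable_id,
    Measure.infinitePi_map_eval _⟩

theorem measure_eq_inv_card_of_map_eq_uniformOn {Ω α : Type*} [MeasurableSpace Ω]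
    [MeasurableSpace α] [MeasurableSingletonClass α] [Fintype α] {μ : Measure Ω} {X : Ω → α}
    (hX : Measurable X) (h : μ.map X = uniformOn Set.univ) (c : α) :
    μ {ω | X ω = c} = (Fintype.card α : ℝ≥0∞)⁻¹ := by
  rw [show {ω | X ω = c} = X ⁻¹' {c} from rfl, ← Measure.map_apply hX (measurableSet_singleton c),
    h, uniformOn_univ, Measure.count_singleton, one_div]

section Fibers

variable {α β γ : Type*} [Fintype α] [Fintype β] [DecidableEq γ]

theorem exists_equiv_comp_eq_of_card_fiber_eq {f : α → γ} {g : β → γ}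
    (h : ∀ c, #{a | f a = c} = #{b | g b = c}) : ∃ e : α ≃ β, ∀ a, g (e a) = f a :=
  ⟨Equiv.ofFiberEquiv fun c => Fintype.equivOfCardEq (by simpa [Fintype.card_subtype] using h c),
    Equiv.ofFiberEquiv_map _⟩

theorem card_fiber_eq_of_forall_ne [Fintype γ] {f g : α → γ} {c₀ : γ}
    (h : ∀ c ≠ c₀, #{a | f a = c} = #{a | g a = c}) : #{a | f a = c₀} = #{a | g a = c₀} := by
  have total : ∀ f : α → γ, #{a | f a = c₀} + ∑ c ∈ univ.erase c₀, #{a | f a = c} =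
      Fintype.card α := fun f => by
    rw [add_sum_erase _ (fun c => #{a | f a = c}) (mem_univ c₀), ← card_univ,
      card_eq_sum_card_fiberwise fun a _ => mem_univ (f a)]
  have rest : ∑ c ∈ univ.erase c₀, #{a | f a = c} = ∑ c ∈ univ.erase c₀, #{a | g a = c} :=
    sum_congr rfl fun c hc => h c (ne_of_mem_erase hc)
  have := total f
  have := total g
  omega

end Fibers

section Domination

variable {n k : ℕ}

def usdResponse : Option (Fin k) → Option (Fin k) → Option (Fin k)
  | some i, some j => if i = j then some i else none
  | none, some j => some j
  | s, _ => s

theorem usdStep_apply (σ : Fin n → Option (Fin k)) (pr : Fin n × Fin n) (a : Fin n) :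
    usdStep σ pr a = if a = pr.1 then usdResponse (σ pr.1) (σ pr.2) else σ a := rfl

def standing (i : Fin k) : Option (Fin k) → ℕ
  | some j => if j = i then 2 else 0
  | none => 1

def mergeOthers (i : Fin k) : Option (Fin k) → Option (Fin 2) :=
  Option.map fun j => if j = i then 0 else 1

@[simp]
theorem standing_mergeOthers (i : Fin k) (x : Option (Fin k)) :
    standing 0 (mergeOthers i x) = standing i x := by
  rcases x with _ | j
  · rfl
  · by_cases hj : j = i <;> simp [standing, mergeOthers, hj]

theorem mergeOthers_eq_some_zero_iff {i : Fin k} {x : Option (Fin k)} :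
    mergeOthers i x = some 0 ↔ x = some i := by
  rcases x with _ | j
  · simp [mergeOthers]
  · by_cases hj : j = i <;> simp [mergeOthers, hj]

theorem mergeOthers_eq_none_iff {i : Fin k} {x : Option (Fin k)} :
    mergeOthers i x = none ↔ x = none :=
  Option.map_eq_none_iff

theorem standing_usdResponse_mono :
    ∀ x y x' y' : Option (Fin 2), standing 0 x ≤ standing 0 x' → standing 0 y ≤ standing 0 y' →
      standing 0 (usdResponse x y) ≤ standing 0 (usdResponse x' y') := by
  decide

-- Merging loses only a clash of two distinct opinions other than `i`, which leaves the
-- `k`-opinion responder undecided instead of unchanged.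
theorem standing_usdResponse_mergeOthers_le (i : Fin k) (x y : Option (Fin k)) :
    standing 0 (usdResponse (mergeOthers i x) (mergeOthers i y)) ≤
      standing i (usdResponse x y) := by
  rcases x with _ | j <;> rcases y with _ | j' <;>
    simp only [usdResponse, mergeOthers, Option.map_some, Option.map_none] <;>
    (try split_ifs) <;> simp_all [standing]


variable {i : Fin k}

theorem standing_usdStep_le {τ : Fin n → Option (Fin 2)} {σ : Fin n → Option (Fin k)}
    (h : ∀ a, standing 0 (τ a) ≤ standing i (σ a)) (pr : Fin n × Fin n) (a : Fin n) :
    standing 0 (usdStep τ pr a) ≤ standing i (usdStep σ pr a) := by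
  rw [usdStep_apply, usdStep_apply]
  split_ifs
  · calc standing 0 (usdResponse (τ pr.1) (τ pr.2))
        ≤ standing 0 (usdResponse (mergeOthers i (σ pr.1)) (mergeOthers i (σ pr.2))) :=
          standing_usdResponse_mono _ _ _ _ (by simpa using h pr.1) (by simpa using h pr.2)
      _ ≤ standing i (usdResponse (σ pr.1) (σ pr.2)) := standing_usdResponse_mergeOthers_le i _ _
  · exact h a

theorem standing_usdEvolve_le {τ₀ : Fin n → Option (Fin 2)} {σ₀ : Fin n → Option (Fin k)}
    (h : ∀ a, standing 0 (τ₀ a) ≤ standing i (σ₀ a)) (ρ : ℕ → Fin n × Fin n) (t : ℕ)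
    (a : Fin n) :
    standing 0 (usdEvolve τ₀ ρ t a) ≤ standing i (usdEvolve σ₀ ρ t a) := by
  induction t generalizing a with
  | zero => exact h a
  | succ t ih => exact standing_usdStep_le ih (ρ t) a

theorem two_le_standing_iff {x : Option (Fin k)} : 2 ≤ standing i x ↔ x = some i := by
  rcases x with _ | j
  · simp [standing]
  · by_cases hj : j = i <;> simp [standing, hj]

theorem opinionSupport_eq_card_two_le_standing (σ : Fin n → Option (Fin k)) (i : Fin k) :
    opinionSupport σ i = #{a | 2 ≤ standing i (σ a)} := by
  simp only [opinionSupport, two_le_standing_iff]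

theorem opinionSupport_add_undecidedCount (σ : Fin n → Option (Fin k)) (i : Fin k) :
    opinionSupport σ i + undecidedCount σ = #{a | 1 ≤ standing i (σ a)} := by
  unfold opinionSupport undecidedCount
  simp only [card_filter, ← sum_add_distrib]
  refine sum_congr rfl fun a _ => ?_
  rcases σ a with _ | j
  · simp [standing]
  · by_cases hj : j = i <;> simp [standing, hj]

theorem counts_le_of_standing_le {τ : Fin n → Option (Fin 2)} {σ : Fin n → Option (Fin k)}
    (h : ∀ a, standing 0 (τ a) ≤ standing i (σ a)) :
    opinionSupport τ 0 ≤ opinionSupport σ i ∧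
      opinionSupport τ 0 + undecidedCount τ ≤ opinionSupport σ i + undecidedCount σ := by
  rw [opinionSupport_add_undecidedCount, opinionSupport_add_undecidedCount,
    opinionSupport_eq_card_two_le_standing, opinionSupport_eq_card_two_le_standing]
  exact ⟨card_le_card (monotone_filter_right _ fun a _ ha => ha.trans (h a)),
    card_le_card (monotone_filter_right _ fun a _ ha => ha.trans (h a))⟩

end Domination

section Relabelling

variable {n k : ℕ}

theorem usdEvolve_comp_perm (σ₀ : Fin n → Option (Fin k)) (π : Equiv.Perm (Fin n))
    (ρ : ℕ → Fin n × Fin n) (t : ℕ) :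
    usdEvolve σ₀ (Prod.map π π ∘ ρ) t ∘ π = usdEvolve (σ₀ ∘ π) ρ t := by
  induction t with
  | zero => rfl
  | succ t ih =>
    funext a
    simp only [usdEvolve, Function.comp_apply, usdStep_apply, Prod.map_fst, Prod.map_snd,
      π.injective.eq_iff, ← ih]

@[simp]
theorem opinionSupport_comp_perm (σ : Fin n → Option (Fin k)) (π : Equiv.Perm (Fin n))
    (i : Fin k) : opinionSupport (σ ∘ π) i = opinionSupport σ i :=
  card_equiv π (by simp)

@[simp]
theorem undecidedCount_comp_perm (σ : Fin n → Option (Fin k)) (π : Equiv.Perm (Fin n)) :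
    undecidedCount (σ ∘ π) = undecidedCount σ :=
  card_equiv π (by simp)

theorem exists_perm_mergeOthers_comp {σ₀ : Fin n → Option (Fin k)} {τ₀ : Fin n → Option (Fin 2)}
    {i : Fin k} (h1 : opinionSupport τ₀ 0 = opinionSupport σ₀ i)
    (hu : undecidedCount τ₀ = undecidedCount σ₀) :
    ∃ π : Equiv.Perm (Fin n), ∀ a, mergeOthers i (σ₀ (π a)) = τ₀ a := by
  have hfib : ∀ c ≠ some 1, #{a | τ₀ a = c} = #{a | mergeOthers i (σ₀ a) = c}
    | none, _ => by simpa [undecidedCount, mergeOthers_eq_none_iff] using hu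
    | some 0, _ => by simpa [opinionSupport, mergeOthers_eq_some_zero_iff] using h1
    | some 1, hc => absurd rfl hc
  exact exists_equiv_comp_eq_of_card_fiber_eq (f := τ₀) (g := mergeOthers i ∘ σ₀) fun c =>
    if hc : c = some 1 then hc ▸ card_fiber_eq_of_forall_ne hfib else hfib c hc

end Relabelling

theorem usd_two_opinion_coupling_general
    (n k : ℕ) (hn : 0 < n) (hk : 0 < k)
    (σ₀ : Fin n → Option (Fin k)) (τ₀ : Fin n → Option (Fin 2))
    (h1 : opinionSupport τ₀ 0 = opinionSupport σ₀ ⟨0, hk⟩)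
    (hu : undecidedCount τ₀ = undecidedCount σ₀) :
    ∃ (Ω : Type) (_ : MeasurableSpace Ω) (μ : Measure Ω)
      (ρ₁ ρ₂ : ℕ → Ω → Fin n × Fin n),
      IsProbabilityMeasure μ ∧
      (∀ t, Measurable (ρ₁ t)) ∧ (∀ t, Measurable (ρ₂ t)) ∧
      iIndepFun ρ₁ μ ∧
      iIndepFun ρ₂ μ ∧
      (∀ (t : ℕ) (pr : Fin n × Fin n), μ {ω | ρ₁ t ω = pr} = ((n : ℝ≥0∞) ^ 2)⁻¹) ∧
      (∀ (t : ℕ) (pr : Fin n × Fin n), μ {ω | ρ₂ t ω = pr} = ((n : ℝ≥0∞) ^ 2)⁻¹) ∧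
      (∀ (ω : Ω) (t : ℕ),
        opinionSupport (usdEvolve τ₀ (fun s => ρ₂ s ω) t) 0
          ≤ opinionSupport (usdEvolve σ₀ (fun s => ρ₁ s ω) t) ⟨0, hk⟩ ∧
        opinionSupport (usdEvolve τ₀ (fun s => ρ₂ s ω) t) 0
            + undecidedCount (usdEvolve τ₀ (fun s => ρ₂ s ω) t)
          ≤ opinionSupport (usdEvolve σ₀ (fun s => ρ₁ s ω) t) ⟨0, hk⟩
            + undecidedCount (usdEvolve σ₀ (fun s => ρ₁ s ω) t)) := by
  have : NeZero n := ⟨hn.ne'⟩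
  obtain ⟨π, hπ⟩ := exists_perm_mergeOthers_comp h1 hu
  obtain ⟨Ω, _, μ, ρ, hμ, hρ, hind, hlaw⟩ :=
    exists_iIndepFun_map_eq ℕ (uniformOn (Set.univ : Set (Fin n × Fin n)))
  have hρ_unif (t : ℕ) (pr : Fin n × Fin n) : μ {ω | ρ t ω = pr} = ((n : ℝ≥0∞) ^ 2)⁻¹ := by
    rw [measure_eq_inv_card_of_map_eq_uniformOn (hρ t) (hlaw t), Fintype.card_prod,
      Fintype.card_fin, Nat.cast_mul, sq]
  have hπ₂ : Measurable (π.prodCongr π) := measurable_of_countable _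
  refine ⟨Ω, _, μ, fun t => π.prodCongr π ∘ ρ t, ρ, hμ, fun t => hπ₂.comp (hρ t), hρ,
    hind.comp _ fun _ => hπ₂, hind, fun t pr => ?_, hρ_unif, fun ω t => ?_⟩
  · simpa only [Function.comp_apply, ← Equiv.eq_symm_apply] using
      hρ_unif t ((π.prodCongr π).symm pr)
  · have hdom (a : Fin n) : standing 0 (τ₀ a) ≤ standing ⟨0, hk⟩ ((σ₀ ∘ π) a) :=
      hπ a ▸ (standing_mergeOthers _ _).le
    set σt := usdEvolve σ₀ (fun s => (π.prodCongr π ∘ ρ s) ω) t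
    have hσt : σt ∘ π = usdEvolve (σ₀ ∘ π) (fun s => ρ s ω) t := usdEvolve_comp_perm σ₀ π _ t
    rw [← opinionSupport_comp_perm σt π, ← undecidedCount_comp_perm σt π, hσt]
    exact counts_le_of_standing_le (standing_usdEvolve_le hdom _ t)

/-- Consider the USD with `k` opinions started from `σ₀` and the USD with
`2` opinions started from `τ₀`, where `x̃₁(0) = x₁(0)`, `x̃₂(0) = ∑_{i ≥ 2} xᵢ(0)` and
`ũ(0) = u(0)`. Then there is a coupling of the two processes (each driven by i.i.d.
uniformly random ordered interaction pairs) such that for all times `t`: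
`x₁(t) ≥ x̃₁(t)` and `x₁(t) + u(t) ≥ x̃₁(t) + ũ(t)`. -/
theorem usd_two_opinion_coupling
    (n k : ℕ) (hn : 0 < n) (hk : 0 < k)
    (σ₀ : Fin n → Option (Fin k)) (τ₀ : Fin n → Option (Fin 2))
    (h1 : opinionSupport τ₀ 0 = opinionSupport σ₀ ⟨0, hk⟩)
    (h2 : opinionSupport τ₀ 1
      = ∑ i ∈ Finset.univ.filter (fun i : Fin k => i ≠ ⟨0, hk⟩), opinionSupport σ₀ i)
    (hu : undecidedCount τ₀ = undecidedCount σ₀) :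
    ∃ (Ω : Type) (_ : MeasurableSpace Ω) (μ : Measure Ω)
      (ρ₁ ρ₂ : ℕ → Ω → Fin n × Fin n),
      IsProbabilityMeasure μ ∧
      (∀ t, Measurable (ρ₁ t)) ∧ (∀ t, Measurable (ρ₂ t)) ∧
      iIndepFun ρ₁ μ ∧
      iIndepFun ρ₂ μ ∧
      (∀ (t : ℕ) (pr : Fin n × Fin n), μ {ω | ρ₁ t ω = pr} = ((n : ℝ≥0∞) ^ 2)⁻¹) ∧
      (∀ (t : ℕ) (pr : Fin n × Fin n), μ {ω | ρ₂ t ω = pr} = ((n : ℝ≥0∞) ^ 2)⁻¹) ∧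
      (∀ (ω : Ω) (t : ℕ),
        opinionSupport (usdEvolve τ₀ (fun s => ρ₂ s ω) t) 0
          ≤ opinionSupport (usdEvolve σ₀ (fun s => ρ₁ s ω) t) ⟨0, hk⟩ ∧
        opinionSupport (usdEvolve τ₀ (fun s => ρ₂ s ω) t) 0
            + undecidedCount (usdEvolve τ₀ (fun s => ρ₂ s ω) t)
          ≤ opinionSupport (usdEvolve σ₀ (fun s => ρ₁ s ω) t) ⟨0, hk⟩
            + undecidedCount (usdEvolve σ₀ (fun s => ρ₁ s ω) t)) :=
  usd_two_opinion_coupling_general n k hn hk σ₀ τ₀ h1 hu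
end
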